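/- (Closed-loop dissipation identity) Let q, k, σ > 0 be gains. For every classical solution of the liquid-tank system whose input is given by the feedback law f(t) = −σ( 2∫₀ᴸ h(t,x)v(t,x) dx + μ(h(t,L) − h(t,0)) − q(w(t) + kξ(t)) ) for t > 0, the Lyapunov functional V(ξ(t),w(t),h[t],v[t]) := W(h[t],v[t]) + E(h[t],v[t]) + (qk²/2)ξ(t)² + (q/2)(w(t)+kξ(t))² satisfies, for all t > 0: d/dt V(ξ(t),w(t),h[t],v[t]) = −μg ∫₀ᴸ h_x(t,x)² dx − μ ∫₀ᴸ h(t,x)v_x(t,x)² dx − qk³ ξ(t)² + qk(w(t)+kξ(t))² − σ( ∫₀ᴸ (2h(t,x)v(t,x) + μ h_x(t,x)) dx − q(w(t)+kξ(t)) )². -/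

import Mathlib

set_option linter.unusedVariables false

open Set MeasureTheory

/-- A classical solution of the liquid-tank system: `(h,v)` classical solutions of the viscous Saint-Venant PDEs on
[0,∞)×[0,L] with input `f`, with `h ∈ C¹([0,∞)×[0,L];(0,∞)) ∩ C²((0,∞)×(0,L))`,
`v ∈ C⁰([0,∞)×[0,L]) ∩ C¹((0,∞)×[0,L])` and `v(t,⬝) ∈ C²((0,L))` for `t > 0`.
The fields `ht, hx, hxx, hxt, vt, vx, vxx` are the partial derivatives. -/
structure ClassicalSolution (L g μ m : ℝ) where
  f : ℝ → ℝ
  xi : ℝ → ℝ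
  w : ℝ → ℝ
  h : ℝ → ℝ → ℝ
  v : ℝ → ℝ → ℝ
  ht : ℝ → ℝ → ℝ
  hx : ℝ → ℝ → ℝ
  vt : ℝ → ℝ → ℝ
  vx : ℝ → ℝ → ℝ
  hxx : ℝ → ℝ → ℝ
  hxt : ℝ → ℝ → ℝ
  vxx : ℝ → ℝ → ℝ
  f_cont : ContinuousOn f (Set.Ioi (0:ℝ))
  xi_cont : ContinuousOn xi (Set.Ici (0:ℝ))
  w_cont : ContinuousOn w (Set.Ici (0:ℝ))
  /-- the ODEs `ξ̇ = w`, `ẇ = -f` on `(0,∞)` -/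
  xi_deriv : ∀ t > (0:ℝ), HasDerivAt xi (w t) t
  w_deriv : ∀ t > (0:ℝ), HasDerivAt w (-(f t)) t
  h_pos : ∀ t ∈ Set.Ici (0:ℝ), ∀ x ∈ Set.Icc 0 L, 0 < h t x
  h_cont : ContinuousOn (fun p : ℝ × ℝ => h p.1 p.2) (Set.Ici (0:ℝ) ×ˢ Set.Icc (0:ℝ) L)
  ht_deriv : ∀ t ∈ Set.Ici (0:ℝ), ∀ x ∈ Set.Icc 0 L,
    HasDerivWithinAt (fun τ => h τ x) (ht t x) (Set.Ici 0) t
  hx_deriv : ∀ t ∈ Set.Ici (0:ℝ), ∀ x ∈ Set.Icc 0 L,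
    HasDerivWithinAt (fun y => h t y) (hx t x) (Set.Icc 0 L) x
  ht_cont : ContinuousOn (fun p : ℝ × ℝ => ht p.1 p.2) (Set.Ici (0:ℝ) ×ˢ Set.Icc (0:ℝ) L)
  hx_cont : ContinuousOn (fun p : ℝ × ℝ => hx p.1 p.2) (Set.Ici (0:ℝ) ×ˢ Set.Icc (0:ℝ) L)
  hxx_deriv : ∀ t > (0:ℝ), ∀ x ∈ Set.Ioo 0 L, HasDerivAt (fun y => hx t y) (hxx t x) x
  hxt_deriv : ∀ t > (0:ℝ), ∀ x ∈ Set.Ioo 0 L, HasDerivAt (fun τ => hx τ x) (hxt t x) t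
  hxx_cont : ContinuousOn (fun p : ℝ × ℝ => hxx p.1 p.2) (Set.Ioi (0:ℝ) ×ˢ Set.Ioo (0:ℝ) L)
  v_cont : ContinuousOn (fun p : ℝ × ℝ => v p.1 p.2) (Set.Ici (0:ℝ) ×ˢ Set.Icc (0:ℝ) L)
  vt_deriv : ∀ t > (0:ℝ), ∀ x ∈ Set.Icc 0 L, HasDerivAt (fun τ => v τ x) (vt t x) t
  vx_deriv : ∀ t > (0:ℝ), ∀ x ∈ Set.Icc 0 L,
    HasDerivWithinAt (fun y => v t y) (vx t x) (Set.Icc 0 L) x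
  vt_cont : ContinuousOn (fun p : ℝ × ℝ => vt p.1 p.2) (Set.Ioi (0:ℝ) ×ˢ Set.Icc (0:ℝ) L)
  vx_cont : ContinuousOn (fun p : ℝ × ℝ => vx p.1 p.2) (Set.Ioi (0:ℝ) ×ˢ Set.Icc (0:ℝ) L)
  vxx_deriv : ∀ t > (0:ℝ), ∀ x ∈ Set.Ioo 0 L, HasDerivAt (fun y => vx t y) (vxx t x) x
  vxx_cont : ∀ t > (0:ℝ), ContinuousOn (fun y => vxx t y) (Set.Ioo 0 L)
  /-- the continuity equation `h_t + (hv)_x = 0` for `t > 0`, `x ∈ [0,L]` -/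
  mass_eq : ∀ t > (0:ℝ), ∀ x ∈ Set.Icc 0 L,
    ht t x + (hx t x * v t x + h t x * vx t x) = 0
  /-- the momentum equation `(hv)_t + (hv² + gh²/2)_x = μ(hv_x)_x + hf`
  for `t > 0`, `x ∈ (0,L)` -/
  mom_eq : ∀ t > (0:ℝ), ∀ x ∈ Set.Ioo 0 L,
    (ht t x * v t x + h t x * vt t x)
      + (hx t x * v t x ^ 2 + 2 * h t x * v t x * vx t x + g * h t x * hx t x)
      = μ * (hx t x * vx t x + h t x * vxx t x) + h t x * f t
  /-- the boundary conditions `v(t,0) = v(t,L) = 0` -/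
  bc0 : ∀ t ∈ Set.Ici (0:ℝ), v t 0 = 0
  bcL : ∀ t ∈ Set.Ici (0:ℝ), v t L = 0
  /-- conservation of the total mass -/
  mass_total : ∀ t ∈ Set.Ici (0:ℝ), (∫ x in (0:ℝ)..L, h t x) = m

open intervalIntegral
open scoped Interval

section Helpers

lemma contSlice1 {F : ℝ × ℝ → ℝ} {s u : Set ℝ} (h : ContinuousOn F (s ×ˢ u)) {x : ℝ}
    (hx : x ∈ u) : ContinuousOn (fun τ => F (τ, x)) s :=
  h.comp ((continuous_id.prodMk continuous_const).continuousOn) (fun τ hτ => ⟨hτ, hx⟩)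

lemma contSlice2 {F : ℝ × ℝ → ℝ} {s u : Set ℝ} (h : ContinuousOn F (s ×ˢ u)) {τ : ℝ}
    (hτ : τ ∈ s) : ContinuousOn (fun x => F (τ, x)) u :=
  h.comp ((continuous_const.prodMk continuous_id).continuousOn) (fun x hx => ⟨hτ, hx⟩)

/-- bound on a compact rectangle -/
lemma boundRect {F : ℝ × ℝ → ℝ} {a b c d : ℝ} (h : ContinuousOn F (Icc a b ×ˢ Icc c d)) :
    ∃ M : ℝ, 0 ≤ M ∧ ∀ τ ∈ Icc a b, ∀ x ∈ Icc c d, |F (τ, x)| ≤ M := by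
  obtain ⟨M, hM⟩ := (isCompact_Icc.prod isCompact_Icc).exists_bound_of_continuousOn h
  refine ⟨max M 0, le_max_right _ _, fun τ hτ x hx => ?_⟩
  exact le_trans (hM (τ, x) ⟨hτ, hx⟩) (le_max_left _ _)

/-- continuity of a parametric interval integral -/
lemma contParam {F : ℝ → ℝ → ℝ} {a b c d : ℝ} (hcd : c ≤ d)
    (hF : ContinuousOn (fun p : ℝ × ℝ => F p.1 p.2) (Icc a b ×ˢ Icc c d)) :
    ContinuousOn (fun s => ∫ x in c..d, F s x) (Icc a b) := by
  obtain ⟨M, hM0, hM⟩ := boundRect hF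
  intro s hs
  have hsub : Ι c d ⊆ Icc c d := by rw [uIoc_of_le hcd]; exact Ioc_subset_Icc_self
  apply continuousWithinAt_of_dominated_interval (bound := fun _ => M)
  · filter_upwards [self_mem_nhdsWithin] with τ hτ
    exact (ContinuousOn.mono (contSlice2 hF hτ) hsub).aestronglyMeasurable measurableSet_uIoc
  · filter_upwards [self_mem_nhdsWithin] with τ hτ
    filter_upwards with x hx
    exact hM τ hτ x (hsub hx)
  · exact intervalIntegrable_const
  · filter_upwards with x hx
    exact contSlice1 hF (hsub hx) s hs

/-- differentiation under the interval integral, continuous-compact version -/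
lemma hasDerivAt_trunc {F Ft : ℝ → ℝ → ℝ} {c d s ε M : ℝ} (hε : 0 < ε) (hcd : c ≤ d)
    (hmeas : ∀ τ ∈ Metric.ball s ε, ContinuousOn (F τ) (Icc c d))
    (hbd : ∀ τ ∈ Metric.ball s ε, ∀ x ∈ Icc c d, |Ft τ x| ≤ M)
    (hderiv : ∀ τ ∈ Metric.ball s ε, ∀ x ∈ Icc c d, HasDerivAt (fun σ => F σ x) (Ft τ x) τ)
    (hFt_cont : ContinuousOn (Ft s) (Icc c d)) :
    HasDerivAt (fun τ => ∫ x in c..d, F τ x) (∫ x in c..d, Ft s x) s := by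
  have hsub : Ι c d ⊆ Icc c d := by rw [uIoc_of_le hcd]; exact Ioc_subset_Icc_self
  have hsm : s ∈ Metric.ball s ε := Metric.mem_ball_self hε
  refine (intervalIntegral.hasDerivAt_integral_of_dominated_loc_of_deriv_le (Metric.ball_mem_nhds s hε)
    (bound := fun _ => M) ?_ ?_ ?_ ?_ intervalIntegrable_const ?_).2
  · filter_upwards [Metric.ball_mem_nhds s hε] with τ hτ
    exact ((hmeas τ hτ).mono hsub).aestronglyMeasurable measurableSet_uIoc
  · exact (hmeas s hsm).intervalIntegrable_of_Icc hcd
  · exact ((hFt_cont).mono hsub).aestronglyMeasurable measurableSet_uIoc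
  · filter_upwards with x hx τ hτ
    exact hbd τ hτ x (hsub hx)
  · filter_upwards with x hx τ hτ
    exact hderiv τ hτ x (hsub hx)

end Helpers

section Key

/-- The main workhorse: derivative of `τ ↦ ∫₀ᴸ φ τ x dx` when `∂τφ = R - ∂ₓΨ` with `R, Ψ`
continuous up to the boundary and `Ψ` vanishing at the boundary. -/
lemma key {φ R Ψ Ψx : ℝ → ℝ → ℝ} {L t a b a' b' : ℝ}
    (hL : 0 < L) (h1 : a' < a) (h2 : a < t) (h3 : t < b) (h4 : b < b')
    (hφc : ContinuousOn (fun p : ℝ × ℝ => φ p.1 p.2) (Icc a' b' ×ˢ Icc 0 L))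
    (hRc : ContinuousOn (fun p : ℝ × ℝ => R p.1 p.2) (Icc a' b' ×ˢ Icc 0 L))
    (hΨc : ContinuousOn (fun p : ℝ × ℝ => Ψ p.1 p.2) (Icc a' b' ×ˢ Icc 0 L))
    (hΨ0 : ∀ τ ∈ Icc a' b', Ψ τ 0 = 0) (hΨL : ∀ τ ∈ Icc a' b', Ψ τ L = 0)
    (hΨxc : ContinuousOn (fun p : ℝ × ℝ => Ψx p.1 p.2) (Icc a' b' ×ˢ Ioo 0 L))
    (hΨd : ∀ τ ∈ Icc a' b', ∀ x ∈ Ioo 0 L, HasDerivAt (Ψ τ) (Ψx τ x) x)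
    (hφt : ∀ τ ∈ Icc a' b', ∀ x ∈ Ioo 0 L, HasDerivAt (fun σ => φ σ x) (R τ x - Ψx τ x) τ) :
    HasDerivAt (fun τ => ∫ x in (0:ℝ)..L, φ τ x) (∫ x in (0:ℝ)..L, R t x) t := by
  have htab : t ∈ Icc a b := ⟨h2.le, h3.le⟩
  have habsub : Icc a b ⊆ Icc a' b' := Icc_subset_Icc h1.le h4.le
  -- the small ball radius
  set ε : ℝ := min (a - a') (b' - b) with hε_def
  have hε : 0 < ε := lt_min (by linarith) (by linarith)
  have hball : ∀ s ∈ Icc a b, Metric.ball s ε ⊆ Icc a' b' := by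
    intro s hs σ hσ
    rw [Metric.mem_ball, Real.dist_eq, abs_lt] at hσ
    constructor
    · have : ε ≤ a - a' := min_le_left _ _
      nlinarith [hs.1]
    · have : ε ≤ b' - b := min_le_right _ _
      nlinarith [hs.2]
  -- truncation points
  set c : ℕ → ℝ := fun n => L / (n + 3) with hc_def
  have hc_pos : ∀ n : ℕ, 0 < c n := fun n => div_pos hL (by positivity)
  have hc_lt : ∀ n : ℕ, c n < L - c n := by
    intro n
    have h3n : (3:ℝ) ≤ (n:ℝ) + 3 := by
      have := Nat.cast_nonneg (α := ℝ) n; linarith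
    have : c n ≤ L / 3 := by
      apply div_le_div_of_nonneg_left hL.le (by norm_num) h3n
    nlinarith
  have hc_mem : ∀ n : ℕ, c n ∈ Icc (0:ℝ) L := by
    intro n
    refine ⟨(hc_pos n).le, ?_⟩
    nlinarith [hc_lt n, hc_pos n]
  have hcL_mem : ∀ n : ℕ, L - c n ∈ Icc (0:ℝ) L := by
    intro n
    constructor
    · nlinarith [hc_lt n, hc_pos n]
    · nlinarith [hc_pos n]
  have hIccsub : ∀ n : ℕ, Icc (c n) (L - c n) ⊆ Ioo 0 L := by
    intro n x hx
    exact ⟨lt_of_lt_of_le (hc_pos n) hx.1, lt_of_le_of_lt hx.2 (by nlinarith [hc_pos n])⟩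
  have hIccsub' : ∀ n : ℕ, Icc (c n) (L - c n) ⊆ Icc 0 L := fun n =>
    (hIccsub n).trans Ioo_subset_Icc_self
  have hc_tendsto : Filter.Tendsto c Filter.atTop (nhds 0) := by
    rw [hc_def]
    have h1' : Filter.Tendsto (fun n : ℕ => ((n:ℝ) + 3)) Filter.atTop Filter.atTop :=
      Filter.tendsto_atTop_add_const_right _ 3 tendsto_natCast_atTop_atTop
    have := h1'.inv_tendsto_atTop
    have h2' := this.const_mul L
    simpa [div_eq_mul_inv] using h2'
  -- global bounds
  obtain ⟨MR, hMR0, hMR⟩ := boundRect hRc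
  obtain ⟨MΨ, hMΨ0, hMΨ⟩ := boundRect hΨc
  -- the limit integrand
  set G : ℝ → ℝ := fun s => ∫ x in (0:ℝ)..L, R s x with hG_def
  have hGcont : ContinuousOn G (Icc a' b') := contParam hL.le hRc
  -- inner derivative of truncated integrals
  have dIn : ∀ n : ℕ, ∀ s ∈ Icc a b,
      HasDerivAt (fun σ => ∫ x in (c n)..(L - c n), φ σ x)
        (∫ x in (c n)..(L - c n), (R s x - Ψx s x)) s := by
    intro n s hs
    have hRΨc : ContinuousOn (fun p : ℝ × ℝ => R p.1 p.2 - Ψx p.1 p.2)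
        (Icc a' b' ×ˢ Icc (c n) (L - c n)) := by
      apply ContinuousOn.sub
      · exact hRc.mono (prod_mono_right (hIccsub' n))
      · exact hΨxc.mono (prod_mono_right (hIccsub n))
    obtain ⟨Mn, _, hMn⟩ := boundRect hRΨc
    refine hasDerivAt_trunc (F := φ) (Ft := fun τ x => R τ x - Ψx τ x) (M := Mn)
      hε (hc_lt n).le ?_ ?_ ?_ ?_
    · intro τ hτ
      exact (contSlice2 hφc (hball s hs hτ)).mono (hIccsub' n)
    · intro τ hτ x hx
      exact hMn τ (hball s hs hτ) x hx
    · intro τ hτ x hx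
      exact hφt τ (hball s hs hτ) x (hIccsub n hx)
    · exact (contSlice2 hRΨc (habsub hs))
  -- rewriting the inner derivative value
  have dVal : ∀ n : ℕ, ∀ s ∈ Icc a b,
      (∫ x in (c n)..(L - c n), (R s x - Ψx s x))
        = (∫ x in (c n)..(L - c n), R s x) - (Ψ s (L - c n) - Ψ s (c n)) := by
    intro n s hs
    have hRint : IntervalIntegrable (R s) MeasureTheory.volume (c n) (L - c n) := by
      apply ContinuousOn.intervalIntegrable
      exact (contSlice2 hRc (habsub hs)).mono
        ((uIcc_subset_Icc (hc_mem n) (hcL_mem n)))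
    have hΨxint : IntervalIntegrable (Ψx s) MeasureTheory.volume (c n) (L - c n) := by
      apply ContinuousOn.intervalIntegrable
      refine (contSlice2 hΨxc (habsub hs)).mono ?_
      rw [uIcc_of_le (hc_lt n).le]
      exact hIccsub n
    rw [intervalIntegral.integral_sub hRint hΨxint]
    congr 1
    apply intervalIntegral.integral_eq_sub_of_hasDerivAt_of_le (hc_lt n).le
    · exact (contSlice2 hΨc (habsub hs)).mono (hIccsub' n)
    · intro x hx
      exact hΨd s (habsub hs) x (hIccsub n (Ioo_subset_Icc_self hx))
    · exact hΨxint
  -- the truncated fundamental identity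
  set Gn : ℕ → ℝ → ℝ := fun n s =>
    (∫ x in (c n)..(L - c n), R s x) - (Ψ s (L - c n) - Ψ s (c n)) with hGn_def
  have hGncont : ∀ n, ContinuousOn (Gn n) (Icc a' b') := by
    intro n
    apply ContinuousOn.sub
    · exact (contParam (hc_lt n).le (hRc.mono (prod_mono_right (hIccsub' n))))
    · exact ContinuousOn.sub (contSlice1 hΨc (hcL_mem n)) (contSlice1 hΨc (hc_mem n))
  have En : ∀ n : ℕ, ∀ τ ∈ Icc a b,
      (∫ x in (c n)..(L - c n), φ τ x) - (∫ x in (c n)..(L - c n), φ t x)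
        = ∫ s in t..τ, Gn n s := by
    intro n τ hτ
    symm
    apply intervalIntegral.integral_eq_sub_of_hasDerivAt
    · intro s hs
      have hs' : s ∈ Icc a b := uIcc_subset_Icc htab hτ hs
      have := dIn n s hs'
      rw [dVal n s hs'] at this
      exact this
    · apply ContinuousOn.intervalIntegrable
      exact (hGncont n).mono ((uIcc_subset_Icc htab hτ).trans habsub)
  -- limits of truncated integrals of a fixed-time slice
  have hTendφ : ∀ (H : ℝ → ℝ), ContinuousOn H (Icc 0 L) →
      Filter.Tendsto (fun n => ∫ x in (c n)..(L - c n), H x) Filter.atTop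
        (nhds (∫ x in (0:ℝ)..L, H x)) := by
    intro H hH
    have hint : ∀ u ∈ Icc (0:ℝ) L, IntervalIntegrable H MeasureTheory.volume 0 u := by
      intro u hu
      apply ContinuousOn.intervalIntegrable
      exact hH.mono (by rw [uIcc_of_le hu.1]; exact Icc_subset_Icc le_rfl hu.2)
    have hsplit : ∀ n : ℕ, (∫ x in (c n)..(L - c n), H x)
        = (∫ x in (0:ℝ)..(L - c n), H x) - (∫ x in (0:ℝ)..(c n), H x) := by
      intro n
      rw [intervalIntegral.integral_interval_sub_left (hint _ (hcL_mem n)) (hint _ (hc_mem n))]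
    simp only [hsplit]
    have hprim : ContinuousOn (fun u => ∫ x in (0:ℝ)..u, H x) (Icc 0 L) := by
      have := continuousOn_primitive_interval
        (a := (0:ℝ)) (b := L) (f := H) (μ := MeasureTheory.volume) ?_
      · rwa [uIcc_of_le hL.le] at this
      · rw [uIcc_of_le hL.le]
        exact hH.integrableOn_compact' (μ := MeasureTheory.volume) isCompact_Icc
          measurableSet_Icc
    have hLmem : L ∈ Icc (0:ℝ) L := ⟨hL.le, le_rfl⟩
    have h0mem : (0:ℝ) ∈ Icc (0:ℝ) L := ⟨le_rfl, hL.le⟩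
    have t1 : Filter.Tendsto (fun n : ℕ => L - c n) Filter.atTop (nhdsWithin L (Icc 0 L)) := by
      apply tendsto_nhdsWithin_of_tendsto_nhds_of_eventually_within
      · simpa using (tendsto_const_nhds (x := L)).sub hc_tendsto
      · exact Filter.Eventually.of_forall (fun n => hcL_mem n)
    have t0 : Filter.Tendsto c Filter.atTop (nhdsWithin 0 (Icc 0 L)) := by
      apply tendsto_nhdsWithin_of_tendsto_nhds_of_eventually_within
      · exact hc_tendsto
      · exact Filter.Eventually.of_forall (fun n => hc_mem n)
    have l1 := ((hprim L hLmem).tendsto.comp t1)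
    have l0 := ((hprim 0 h0mem).tendsto.comp t0)
    rw [intervalIntegral.integral_same] at l0
    simpa using l1.sub l0
  -- the untruncated fundamental identity
  have EnLim : ∀ τ ∈ Icc a b,
      (∫ x in (0:ℝ)..L, φ τ x) - (∫ x in (0:ℝ)..L, φ t x) = ∫ s in t..τ, G s := by
    intro τ hτ
    have lhs_tendsto : Filter.Tendsto
        (fun n => (∫ x in (c n)..(L - c n), φ τ x) - (∫ x in (c n)..(L - c n), φ t x))
        Filter.atTop
        (nhds ((∫ x in (0:ℝ)..L, φ τ x) - (∫ x in (0:ℝ)..L, φ t x))) := by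
      exact (hTendφ _ (contSlice2 hφc (habsub hτ))).sub (hTendφ _ (contSlice2 hφc (habsub htab)))
    have rhs_tendsto : Filter.Tendsto (fun n => ∫ s in t..τ, Gn n s) Filter.atTop
        (nhds (∫ s in t..τ, G s)) := by
      apply intervalIntegral.tendsto_integral_filter_of_dominated_convergence
        (bound := fun _ => MR * L + 2 * MΨ)
      · apply Filter.Eventually.of_forall
        intro n
        apply ContinuousOn.aestronglyMeasurable _ measurableSet_uIoc
        exact (hGncont n).mono
          ((uIoc_subset_uIcc).trans ((uIcc_subset_Icc htab hτ).trans habsub))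
      · apply Filter.Eventually.of_forall
        intro n
        apply Filter.Eventually.of_forall
        intro s hs
        have hs' : s ∈ Icc a' b' :=
          habsub (uIcc_subset_Icc htab hτ (uIoc_subset_uIcc hs))
        have b1 : |∫ x in (c n)..(L - c n), R s x| ≤ MR * L := by
          have := intervalIntegral.norm_integral_le_of_norm_le_const
            (C := MR) (f := R s) (a := c n) (b := L - c n) ?_
          · apply le_trans this
            have : |L - c n - c n| ≤ L := by
              rw [abs_of_nonneg (by nlinarith [hc_lt n])]
              nlinarith [hc_pos n]
            nlinarith
          · intro x hx
            have hx' : x ∈ Icc 0 L := hIccsub' n (by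
              rw [uIoc_of_le (hc_lt n).le] at hx
              exact Ioc_subset_Icc_self hx)
            exact hMR s hs' x hx'
        have b2 : |Ψ s (L - c n)| ≤ MΨ := hMΨ s hs' _ (hcL_mem n)
        have b3 : |Ψ s (c n)| ≤ MΨ := hMΨ s hs' _ (hc_mem n)
        rw [hGn_def]
        simp only [Real.norm_eq_abs]
        calc |(∫ x in (c n)..(L - c n), R s x) - (Ψ s (L - c n) - Ψ s (c n))|
            ≤ |∫ x in (c n)..(L - c n), R s x| + |Ψ s (L - c n) - Ψ s (c n)| := abs_sub _ _
          _ ≤ MR * L + 2 * MΨ := by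
              have := abs_sub (Ψ s (L - c n)) (Ψ s (c n))
              linarith [abs_sub (Ψ s (L - c n)) (Ψ s (c n))]
      · exact intervalIntegrable_const
      · apply Filter.Eventually.of_forall
        intro s hs
        have hs' : s ∈ Icc a' b' :=
          habsub (uIcc_subset_Icc htab hτ (uIoc_subset_uIcc hs))
        have hRs : Filter.Tendsto (fun n => ∫ x in (c n)..(L - c n), R s x) Filter.atTop
            (nhds (G s)) := hTendφ _ (contSlice2 hRc hs')
        have hΨs : ContinuousOn (Ψ s) (Icc 0 L) := contSlice2 hΨc hs'
        have hΨL' : Filter.Tendsto (fun n => Ψ s (L - c n)) Filter.atTop (nhds 0) := by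
          have t1 : Filter.Tendsto (fun n : ℕ => L - c n) Filter.atTop
              (nhdsWithin L (Icc 0 L)) := by
            apply tendsto_nhdsWithin_of_tendsto_nhds_of_eventually_within
            · simpa using (tendsto_const_nhds (x := L)).sub hc_tendsto
            · exact Filter.Eventually.of_forall (fun n => hcL_mem n)
          have := (hΨs L ⟨hL.le, le_rfl⟩).tendsto.comp t1
          rwa [hΨL s hs'] at this
        have hΨ0' : Filter.Tendsto (fun n => Ψ s (c n)) Filter.atTop (nhds 0) := by
          have t0 : Filter.Tendsto c Filter.atTop (nhdsWithin 0 (Icc 0 L)) := by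
            apply tendsto_nhdsWithin_of_tendsto_nhds_of_eventually_within
            · exact hc_tendsto
            · exact Filter.Eventually.of_forall (fun n => hc_mem n)
          have := (hΨs 0 ⟨le_rfl, hL.le⟩).tendsto.comp t0
          rwa [hΨ0 s hs'] at this
        have := hRs.sub (hΨL'.sub hΨ0')
        simpa using this
    have eqseq : ∀ n : ℕ,
        (∫ x in (c n)..(L - c n), φ τ x) - (∫ x in (c n)..(L - c n), φ t x)
          = ∫ s in t..τ, Gn n s := fun n => En n τ hτ
    have : Filter.Tendsto (fun n => ∫ s in t..τ, Gn n s) Filter.atTop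
        (nhds ((∫ x in (0:ℝ)..L, φ τ x) - (∫ x in (0:ℝ)..L, φ t x))) := by
      rwa [Filter.tendsto_congr eqseq] at lhs_tendsto
    exact tendsto_nhds_unique this rhs_tendsto
  -- conclude via FTC
  have hGIoo : ContinuousOn G (Ioo a' b') := hGcont.mono Ioo_subset_Icc_self
  have htIoo : t ∈ Ioo a' b' := ⟨by linarith, by linarith⟩
  have hFTC : HasDerivAt (fun τ => (∫ x in (0:ℝ)..L, φ t x) + ∫ s in t..τ, G s) (G t) t := by
    have h := intervalIntegral.integral_hasDerivAt_right (f := G) (a := t) (b := t)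
      (by apply ContinuousOn.intervalIntegrable
          exact hGcont.mono (by rw [uIcc_of_le le_rfl]; intro x hx; exact habsub (by
            simpa [mem_Icc] using (by
              simp only [mem_Icc] at hx
              exact ⟨le_trans h2.le hx.1, le_trans hx.2 h3.le⟩ : x ∈ Icc a b))))
      (hGIoo.stronglyMeasurableAtFilter isOpen_Ioo t htIoo)
      (hGIoo.continuousAt (Ioo_mem_nhds htIoo.1 htIoo.2))
    simpa using h
  apply hFTC.congr_of_eventuallyEq
  have hmem : Ioo a b ∈ nhds t := Ioo_mem_nhds h2 h3
  filter_upwards [hmem] with τ hτ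
  have := EnLim τ (Ioo_subset_Icc_self hτ)
  linarith [this]

namespace TankAux

open Set MeasureTheory intervalIntegral

variable {L g μ m : ℝ}

/-- `μ h vxx` from the momentum equation -/
noncomputable def E1 (sol : ClassicalSolution L g μ m) (τ x : ℝ) : ℝ :=
  sol.ht τ x * sol.v τ x + sol.h τ x * sol.vt τ x + sol.hx τ x * sol.v τ x ^ 2
    + 2 * sol.h τ x * sol.v τ x * sol.vx τ x + g * sol.h τ x * sol.hx τ x
    - μ * sol.hx τ x * sol.vx τ x - sol.h τ x * sol.f τ

/-- continuous version of `vxx` -/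
noncomputable def vxxT (sol : ClassicalSolution L g μ m) (τ x : ℝ) : ℝ := E1 sol τ x / (μ * sol.h τ x)

/-- continuous version of `hxt` -/
noncomputable def Ncont (sol : ClassicalSolution L g μ m) (τ x : ℝ) : ℝ :=
  -(sol.hxx τ x * sol.v τ x + 2 * sol.hx τ x * sol.vx τ x + sol.h τ x * vxxT sol τ x)

variable {sol : ClassicalSolution L g μ m}

lemma h_ne (hτ : (0:ℝ) ≤ τ) (hx : x ∈ Icc 0 L) : sol.h τ x ≠ 0 :=
  (sol.h_pos τ hτ x hx).ne'

lemma vxxT_eq (hμ : 0 < μ) (hτ : (0:ℝ) < τ) (hx : x ∈ Ioo 0 L) (hxL : 0 < L) :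
    vxxT sol τ x = sol.vxx τ x := by
  have hmom := sol.mom_eq τ hτ x hx
  have hpos := sol.h_pos τ hτ.le x (Ioo_subset_Icc_self hx)
  rw [vxxT, E1]
  field_simp
  nlinarith [hmom]

lemma ht_eq (hτ : (0:ℝ) < τ) (hx : x ∈ Icc 0 L) :
    sol.ht τ x = -(sol.hx τ x * sol.v τ x + sol.h τ x * sol.vx τ x) := by
  have := sol.mass_eq τ hτ x hx
  linarith

section Cont

variable {a' b' : ℝ} (ha' : 0 < a')
include ha'

lemma subIci : Icc a' b' ×ˢ Icc 0 L ⊆ Ici (0:ℝ) ×ˢ Icc 0 L :=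
  prod_mono_left (fun τ hτ => le_trans ha'.le hτ.1)

lemma subIoi : Icc a' b' ×ˢ Icc 0 L ⊆ Ioi (0:ℝ) ×ˢ Icc 0 L :=
  prod_mono_left (fun τ hτ => lt_of_lt_of_le ha' hτ.1)

lemma cont_h : ContinuousOn (fun p : ℝ × ℝ => sol.h p.1 p.2) (Icc a' b' ×ˢ Icc 0 L) :=
  sol.h_cont.mono (subIci ha')
lemma cont_ht : ContinuousOn (fun p : ℝ × ℝ => sol.ht p.1 p.2) (Icc a' b' ×ˢ Icc 0 L) :=
  sol.ht_cont.mono (subIci ha')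
lemma cont_hx : ContinuousOn (fun p : ℝ × ℝ => sol.hx p.1 p.2) (Icc a' b' ×ˢ Icc 0 L) :=
  sol.hx_cont.mono (subIci ha')
lemma cont_v : ContinuousOn (fun p : ℝ × ℝ => sol.v p.1 p.2) (Icc a' b' ×ˢ Icc 0 L) :=
  sol.v_cont.mono (subIci ha')
lemma cont_vt : ContinuousOn (fun p : ℝ × ℝ => sol.vt p.1 p.2) (Icc a' b' ×ˢ Icc 0 L) :=
  sol.vt_cont.mono (subIoi ha')
lemma cont_vx : ContinuousOn (fun p : ℝ × ℝ => sol.vx p.1 p.2) (Icc a' b' ×ˢ Icc 0 L) :=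
  sol.vx_cont.mono (subIoi ha')
lemma cont_f : ContinuousOn (fun p : ℝ × ℝ => sol.f p.1) (Icc a' b' ×ˢ Icc 0 L) := by
  apply sol.f_cont.comp continuous_fst.continuousOn
  intro p hp
  exact lt_of_lt_of_le ha' hp.1.1

lemma cont_E1 : ContinuousOn (fun p : ℝ × ℝ => E1 sol p.1 p.2) (Icc a' b' ×ˢ Icc 0 L) := by
  unfold E1
  exact ((((((cont_ht ha').mul (cont_v ha')).add ((cont_h ha').mul (cont_vt ha'))).add
    ((cont_hx ha').mul (((cont_v ha').pow 2)))).add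
    ((((continuousOn_const.mul (cont_h ha')).mul (cont_v ha'))).mul (cont_vx ha'))).add
    (((continuousOn_const.mul (cont_h ha'))).mul (cont_hx ha'))).sub
    (((continuousOn_const.mul (cont_hx ha')).mul (cont_vx ha'))) |>.sub
    ((cont_h ha').mul (cont_f ha'))

lemma cont_vxxT (hμ : 0 < μ) :
    ContinuousOn (fun p : ℝ × ℝ => vxxT sol p.1 p.2) (Icc a' b' ×ˢ Icc 0 L) := by
  unfold vxxT
  apply (cont_E1 ha').div (continuousOn_const.mul (cont_h ha'))
  intro p hp
  have := sol.h_pos p.1 (le_trans ha'.le hp.1.1) p.2 hp.2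
  exact mul_ne_zero hμ.ne' this.ne'

lemma cont_Ncont (hμ : 0 < μ) :
    ContinuousOn (fun p : ℝ × ℝ => Ncont sol p.1 p.2) (Icc a' b' ×ˢ Ioo 0 L) := by
  unfold Ncont
  have hsub : Icc a' b' ×ˢ Ioo (0:ℝ) L ⊆ Icc a' b' ×ˢ Icc 0 L :=
    prod_mono_right Ioo_subset_Icc_self
  have hsub2 : Icc a' b' ×ˢ Ioo (0:ℝ) L ⊆ Ioi (0:ℝ) ×ˢ Ioo 0 L :=
    prod_mono_left (fun τ hτ => lt_of_lt_of_le ha' hτ.1)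
  apply ContinuousOn.neg
  exact (((sol.hxx_cont.mono hsub2).mul ((cont_v ha').mono hsub)).add
    ((continuousOn_const.mul ((cont_hx ha').mono hsub)).mul ((cont_vx ha').mono hsub))).add
    (((cont_h ha').mono hsub).mul ((cont_vxxT ha' hμ).mono hsub))

end Cont

section Schwarz

variable {τ x : ℝ}

lemma hasDerivAt_h_t (hτ : (0:ℝ) < τ) (hx : x ∈ Icc 0 L) :
    HasDerivAt (fun s => sol.h s x) (sol.ht τ x) τ :=
  (sol.ht_deriv τ hτ.le x hx).hasDerivAt (Ici_mem_nhds hτ)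

lemma hasDerivAt_h_x (hτ : (0:ℝ) ≤ τ) (hx : x ∈ Ioo 0 L) :
    HasDerivAt (fun y => sol.h τ y) (sol.hx τ x) x :=
  (sol.hx_deriv τ hτ x (Ioo_subset_Icc_self hx)).hasDerivAt (Icc_mem_nhds hx.1 hx.2)

lemma hasDerivAt_v_x (hτ : (0:ℝ) < τ) (hx : x ∈ Ioo 0 L) :
    HasDerivAt (fun y => sol.v τ y) (sol.vx τ x) x :=
  (sol.vx_deriv τ hτ x (Ioo_subset_Icc_self hx)).hasDerivAt (Icc_mem_nhds hx.1 hx.2)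

/-- Schwarz-type lemma: the mixed derivative `hxt` is given by the spatial derivative of
the continuity equation. -/
lemma hxt_eq (hL : 0 < L) (hμ : 0 < μ) (hτ : (0:ℝ) < τ) (hx : x ∈ Ioo 0 L) :
    sol.hxt τ x = Ncont sol τ x := by
  set τ₀ : ℝ := τ / 2 with hτ₀_def
  set b₀ : ℝ := τ + 1 with hb₀_def
  have hτ₀ : 0 < τ₀ := half_pos hτ
  have hτ₀τ : τ₀ < τ := half_lt_self hτ
  have hτb₀ : τ < b₀ := by rw [hb₀_def]; linarith
  set r : ℝ := min x (L - x) / 2 with hr_def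
  have hr : 0 < r := by
    have h1 := hx.1; have h2 := hx.2
    apply half_pos; exact lt_min h1 (by linarith)
  have hrx : r < x := by
    have : r ≤ x / 2 := by
      apply div_le_div_of_nonneg_right ?_ (by norm_num)
      · exact min_le_left _ _
    linarith [hx.1]
  have hrL : x + r < L := by
    have : r ≤ (L - x) / 2 := by
      apply div_le_div_of_nonneg_right (min_le_right _ _) (by norm_num)
    linarith [hx.2]
  have hIccsub : Icc (x - r) (x + r) ⊆ Ioo 0 L := by
    intro y hy
    exact ⟨by linarith [hy.1], by linarith [hy.2]⟩
  have hIoiIcc : Icc τ₀ b₀ ⊆ Ioi (0:ℝ) := fun s hs => lt_of_lt_of_le hτ₀ hs.1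
  -- continuity and bound for Ncont
  have hNc : ContinuousOn (fun p : ℝ × ℝ => Ncont sol p.1 p.2)
      (Icc τ₀ b₀ ×ˢ Icc (x - r) (x + r)) :=
    (cont_Ncont hτ₀ hμ).mono (prod_mono_right hIccsub)
  obtain ⟨M, hM0, hM⟩ := boundRect hNc
  have hballsub : Metric.ball x r ⊆ Icc (x - r) (x + r) := by
    intro y hy
    rw [Metric.mem_ball, Real.dist_eq, abs_lt] at hy
    exact ⟨by linarith [hy.1], by linarith [hy.2]⟩
  -- the integral representation of hx
  have rep : ∀ σ ∈ Icc τ₀ b₀, sol.hx σ x = sol.hx τ₀ x + ∫ s in τ₀..σ, Ncont sol s x := by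
    intro σ hσ
    have hσ0 : 0 < σ := lt_of_lt_of_le hτ₀ hσ.1
    have hIccσ : Icc τ₀ σ ⊆ Icc τ₀ b₀ := Icc_subset_Icc le_rfl hσ.2
    have hD2 : HasDerivAt (fun y => ∫ s in τ₀..σ, sol.ht s y)
        (∫ s in τ₀..σ, Ncont sol s x) x := by
      refine hasDerivAt_trunc (F := fun y s => sol.ht s y)
        (Ft := fun y s => Ncont sol s y) (M := M) hr hσ.1 ?_ ?_ ?_ ?_
      · intro y hy
        have hy' : y ∈ Icc 0 L := Ioo_subset_Icc_self (hIccsub (hballsub hy))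
        exact (contSlice1 (cont_ht hτ₀) hy').mono hIccσ
      · intro y hy s hs
        exact hM s (hIccσ hs) y (hballsub hy)
      · intro y hy s hs
        have hy' : y ∈ Ioo 0 L := hIccsub (hballsub hy)
        have hs0 : 0 < s := hIoiIcc (hIccσ hs)
        have d1 : HasDerivAt (fun y' => sol.hx s y') (sol.hxx s y) y := sol.hxx_deriv s hs0 y hy'
        have d2 : HasDerivAt (fun y' => sol.v s y') (sol.vx s y) y := hasDerivAt_v_x hs0 hy'
        have d3 : HasDerivAt (fun y' => sol.h s y') (sol.hx s y) y := hasDerivAt_h_x hs0.le hy'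
        have d4 : HasDerivAt (fun y' => sol.vx s y') (sol.vxx s y) y := sol.vxx_deriv s hs0 y hy'
        have dd := ((d1.mul d2).add (d3.mul d4)).neg
        have hval : -(sol.hxx s y * sol.v s y + sol.hx s y * sol.vx s y
            + (sol.hx s y * sol.vx s y + sol.h s y * sol.vxx s y)) = Ncont sol s y := by
          rw [Ncont, vxxT_eq hμ hs0 hy' hL]; ring
        rw [hval] at dd
        apply dd.congr_of_eventuallyEq
        apply Filter.eventuallyEq_of_mem (Ioo_mem_nhds hy'.1 hy'.2)
        intro y'' hy''
        exact ht_eq hs0 (Ioo_subset_Icc_self hy'')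
      · exact (contSlice1 hNc ⟨by linarith, by linarith⟩).mono hIccσ
    have hD : HasDerivAt (fun y => sol.h τ₀ y + ∫ s in τ₀..σ, sol.ht s y)
        (sol.hx τ₀ x + ∫ s in τ₀..σ, Ncont sol s x) x :=
      (hasDerivAt_h_x hτ₀.le hx).add hD2
    have hAB : ∀ y ∈ Icc (x - r) (x + r),
        sol.h σ y = sol.h τ₀ y + ∫ s in τ₀..σ, sol.ht s y := by
      intro y hy
      have hy' : y ∈ Icc 0 L := Ioo_subset_Icc_self (hIccsub hy)
      have : ∫ s in τ₀..σ, sol.ht s y = sol.h σ y - sol.h τ₀ y := by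
        apply intervalIntegral.integral_eq_sub_of_hasDerivAt
        · intro s hs
          have hs' : s ∈ Icc τ₀ σ := by rwa [uIcc_of_le hσ.1] at hs
          exact hasDerivAt_h_t (hIoiIcc (hIccσ hs')) hy'
        · apply ContinuousOn.intervalIntegrable
          refine (contSlice1 (cont_ht (b' := b₀) hτ₀) hy').mono ?_
          rw [uIcc_of_le hσ.1]; exact hIccσ
      linarith
    have hEv : (fun y => sol.h σ y) =ᶠ[nhds x]
        (fun y => sol.h τ₀ y + ∫ s in τ₀..σ, sol.ht s y) :=
      Filter.eventuallyEq_of_mem (Icc_mem_nhds (by linarith) (by linarith)) hAB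
    exact (hasDerivAt_h_x hσ0.le hx).unique (hD.congr_of_eventuallyEq hEv)
  -- differentiate the representation at τ
  have hNcx : ContinuousOn (fun s => Ncont sol s x) (Icc τ₀ b₀) :=
    contSlice1 hNc ⟨by linarith, by linarith⟩
  have hNcIoo : ContinuousOn (fun s => Ncont sol s x) (Ioo τ₀ b₀) :=
    hNcx.mono Ioo_subset_Icc_self
  have hτmem : τ ∈ Ioo τ₀ b₀ := ⟨hτ₀τ, hτb₀⟩
  have hq : HasDerivAt (fun σ => sol.hx τ₀ x + ∫ s in τ₀..σ, Ncont sol s x)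
      (Ncont sol τ x) τ := by
    have h := intervalIntegral.integral_hasDerivAt_right
      (f := fun s => Ncont sol s x) (a := τ₀) (b := τ)
      (by apply ContinuousOn.intervalIntegrable
          exact hNcx.mono (by rw [uIcc_of_le hτ₀τ.le]; exact Icc_subset_Icc le_rfl hτb₀.le))
      (hNcIoo.stronglyMeasurableAtFilter isOpen_Ioo τ hτmem)
      (hNcIoo.continuousAt (Ioo_mem_nhds hτmem.1 hτmem.2))
    simpa using h
  have hEv2 : (fun σ => sol.hx σ x) =ᶠ[nhds τ]
      (fun σ => sol.hx τ₀ x + ∫ s in τ₀..σ, Ncont sol s x) :=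
    Filter.eventuallyEq_of_mem (Ioo_mem_nhds hτmem.1 hτmem.2)
      (fun σ hσ => rep σ (Ioo_subset_Icc_self hσ))
  exact (sol.hxt_deriv τ hτ x hx).unique (hq.congr_of_eventuallyEq hEv2)

end Schwarz

section Derivs

variable {t : ℝ}

lemma mem_pos {t τ : ℝ} (ht0 : 0 < t) (hτ : τ ∈ Icc (t/4) (t+2)) : (0:ℝ) < τ :=
  lt_of_lt_of_le (by linarith) hτ.1

lemma derivB (hL : 0 < L) (ht0 : 0 < t) :
    HasDerivAt (fun τ => ∫ x in (0:ℝ)..L, (sol.h τ x - m/L)^2)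
      (∫ x in (0:ℝ)..L, 2*(sol.h t x - m/L)*sol.ht t x) t := by
  have ha' : (0:ℝ) < t/4 := by linarith
  apply key (φ := fun τ x => (sol.h τ x - m/L)^2)
    (R := fun τ x => 2*(sol.h τ x - m/L)*sol.ht τ x)
    (Ψ := fun _ _ => (0:ℝ)) (Ψx := fun _ _ => (0:ℝ))
    (a' := t/4) (a := t/2) (b := t+1) (b' := t+2)
    hL (by linarith) (by linarith) (by linarith) (by linarith)
  · exact ((cont_h ha').sub continuousOn_const).pow 2
  · exact (continuousOn_const.mul ((cont_h ha').sub continuousOn_const)).mul (cont_ht ha')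
  · exact continuousOn_const
  · intro τ _; rfl
  · intro τ _; rfl
  · exact continuousOn_const
  · intro τ _ x _; exact hasDerivAt_const x 0
  · intro τ hτ x hx
    have hτ0 : 0 < τ := mem_pos ht0 hτ
    have hx' : x ∈ Icc 0 L := Ioo_subset_Icc_self hx
    have := ((hasDerivAt_h_t (sol := sol) hτ0 hx').sub_const (m/L)).pow 2
    refine this.congr_deriv ?_
    ring

lemma derivC (hL : 0 < L) (ht0 : 0 < t) :
    HasDerivAt (fun τ => ∫ x in (0:ℝ)..L, sol.h τ x * sol.v τ x ^ 2)
      (∫ x in (0:ℝ)..L, (sol.ht t x * sol.v t x ^2 + 2 * sol.h t x * sol.v t x * sol.vt t x))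
      t := by
  have ha' : (0:ℝ) < t/4 := by linarith
  apply key (φ := fun τ x => sol.h τ x * sol.v τ x ^ 2)
    (R := fun τ x => sol.ht τ x * sol.v τ x ^2 + 2 * sol.h τ x * sol.v τ x * sol.vt τ x)
    (Ψ := fun _ _ => (0:ℝ)) (Ψx := fun _ _ => (0:ℝ))
    (a' := t/4) (a := t/2) (b := t+1) (b' := t+2)
    hL (by linarith) (by linarith) (by linarith) (by linarith)
  · exact (cont_h ha').mul ((cont_v ha').pow 2)
  · exact ((cont_ht ha').mul ((cont_v ha').pow 2)).add
      ((((continuousOn_const.mul (cont_h ha')).mul (cont_v ha'))).mul (cont_vt ha'))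
  · exact continuousOn_const
  · intro τ _; rfl
  · intro τ _; rfl
  · exact continuousOn_const
  · intro τ _ x _; exact hasDerivAt_const x 0
  · intro τ hτ x hx
    have hτ0 : 0 < τ := mem_pos ht0 hτ
    have hx' : x ∈ Icc 0 L := Ioo_subset_Icc_self hx
    have dv : HasDerivAt (fun σ => sol.v σ x) (sol.vt τ x) τ := sol.vt_deriv τ hτ0 x hx'
    have := (hasDerivAt_h_t (sol := sol) hτ0 hx').mul (dv.pow 2)
    refine this.congr_deriv ?_
    simp only [Pi.mul_apply, Pi.pow_apply, Pi.add_apply, Pi.sub_apply, Pi.neg_apply, Pi.div_apply]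
    ring

lemma derivD (hL : 0 < L) (hμ : 0 < μ) (ht0 : 0 < t) :
    HasDerivAt (fun τ => ∫ x in (0:ℝ)..L, sol.v τ x * sol.hx τ x)
      (∫ x in (0:ℝ)..L, (sol.vt t x * sol.hx t x
        + sol.vx t x * (sol.hx t x * sol.v t x + sol.h t x * sol.vx t x))) t := by
  have ha' : (0:ℝ) < t/4 := by linarith
  apply key (φ := fun τ x => sol.v τ x * sol.hx τ x)
    (R := fun τ x => sol.vt τ x * sol.hx τ x
      + sol.vx τ x * (sol.hx τ x * sol.v τ x + sol.h τ x * sol.vx τ x))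
    (Ψ := fun τ x => sol.v τ x * (sol.hx τ x * sol.v τ x + sol.h τ x * sol.vx τ x))
    (Ψx := fun τ x => sol.vx τ x * (sol.hx τ x * sol.v τ x + sol.h τ x * sol.vx τ x)
      + sol.v τ x * (sol.hxx τ x * sol.v τ x + 2 * sol.hx τ x * sol.vx τ x
          + sol.h τ x * vxxT sol τ x))
    (a' := t/4) (a := t/2) (b := t+1) (b' := t+2)
    hL (by linarith) (by linarith) (by linarith) (by linarith)
  · exact (cont_v ha').mul (cont_hx ha')
  · exact ((cont_vt ha').mul (cont_hx ha')).add ((cont_vx ha').mul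
      (((cont_hx ha').mul (cont_v ha')).add ((cont_h ha').mul (cont_vx ha'))))
  · exact (cont_v ha').mul (((cont_hx ha').mul (cont_v ha')).add ((cont_h ha').mul (cont_vx ha')))
  · intro τ hτ
    rw [sol.bc0 τ (le_of_lt (lt_of_lt_of_le ha' hτ.1))]; ring
  · intro τ hτ
    rw [sol.bcL τ (le_of_lt (lt_of_lt_of_le ha' hτ.1))]; ring
  · have hsub : Icc (t/4) (t+2) ×ˢ Ioo (0:ℝ) L ⊆ Icc (t/4) (t+2) ×ˢ Icc 0 L :=
      prod_mono_right Ioo_subset_Icc_self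
    have hsub2 : Icc (t/4) (t+2) ×ˢ Ioo (0:ℝ) L ⊆ Ioi (0:ℝ) ×ˢ Ioo 0 L :=
      prod_mono_left (fun τ hτ => lt_of_lt_of_le ha' hτ.1)
    exact (((cont_vx ha').mono hsub).mul ((((cont_hx ha').mul (cont_v ha')).add
        ((cont_h ha').mul (cont_vx ha'))).mono hsub)).add
      (((cont_v ha').mono hsub).mul (((sol.hxx_cont.mono hsub2).mul ((cont_v ha').mono hsub)).add
        ((continuousOn_const.mul ((cont_hx ha').mono hsub)).mul ((cont_vx ha').mono hsub))
        |>.add (((cont_h ha').mono hsub).mul ((cont_vxxT ha' hμ).mono hsub))))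
  · intro τ hτ x hx
    have hτ0 : 0 < τ := mem_pos ht0 hτ
    have d1 : HasDerivAt (fun y => sol.v τ y) (sol.vx τ x) x := hasDerivAt_v_x hτ0 hx
    have d2 : HasDerivAt (fun y => sol.hx τ y) (sol.hxx τ x) x := sol.hxx_deriv τ hτ0 x hx
    have d3 : HasDerivAt (fun y => sol.h τ y) (sol.hx τ x) x := hasDerivAt_h_x hτ0.le hx
    have d4 : HasDerivAt (fun y => sol.vx τ y) (sol.vxx τ x) x := sol.vxx_deriv τ hτ0 x hx
    have := d1.mul ((d2.mul d1).add (d3.mul d4))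
    refine this.congr_deriv ?_
    simp only [Pi.mul_apply, Pi.pow_apply, Pi.add_apply, Pi.sub_apply, Pi.neg_apply, Pi.div_apply]
    rw [vxxT_eq hμ hτ0 hx hL]
    ring
  · intro τ hτ x hx
    have hτ0 : 0 < τ := mem_pos ht0 hτ
    have hx' : x ∈ Icc 0 L := Ioo_subset_Icc_self hx
    have dv : HasDerivAt (fun σ => sol.v σ x) (sol.vt τ x) τ := sol.vt_deriv τ hτ0 x hx'
    have dhx : HasDerivAt (fun σ => sol.hx σ x) (sol.hxt τ x) τ := sol.hxt_deriv τ hτ0 x hx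
    have := dv.mul dhx
    refine this.congr_deriv ?_
    rw [hxt_eq hL hμ hτ0 hx, Ncont]
    ring

lemma derivP (hL : 0 < L) (hμ : 0 < μ) (ht0 : 0 < t) :
    HasDerivAt (fun τ => ∫ x in (0:ℝ)..L, sol.hx τ x ^ 2 / sol.h τ x)
      (∫ x in (0:ℝ)..L, (-2 * (sol.hx t x ^2 / sol.h t x) * sol.vx t x
        - 2 * sol.hx t x * vxxT sol t x)) t := by
  have ha' : (0:ℝ) < t/4 := by linarith
  have hne : ∀ τ ∈ Icc (t/4) (t+2), ∀ x ∈ Icc (0:ℝ) L, sol.h τ x ≠ 0 := fun τ hτ x hx =>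
    h_ne (le_of_lt (lt_of_lt_of_le ha' hτ.1)) hx
  apply key (φ := fun τ x => sol.hx τ x ^ 2 / sol.h τ x)
    (R := fun τ x => -2 * (sol.hx τ x ^2 / sol.h τ x) * sol.vx τ x
      - 2 * sol.hx τ x * vxxT sol τ x)
    (Ψ := fun τ x => sol.v τ x * sol.hx τ x ^ 2 / sol.h τ x)
    (Ψx := fun τ x => sol.vx τ x * sol.hx τ x ^2 / sol.h τ x
      + sol.v τ x * (2 * sol.hx τ x * sol.hxx τ x / sol.h τ x
          - sol.hx τ x ^3 / sol.h τ x ^2))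
    (a' := t/4) (a := t/2) (b := t+1) (b' := t+2)
    hL (by linarith) (by linarith) (by linarith) (by linarith)
  · exact ((cont_hx ha').pow 2).div (cont_h ha') (fun p hp => hne p.1 hp.1 p.2 hp.2)
  · apply ContinuousOn.sub
    · exact (continuousOn_const.mul (((cont_hx ha').pow 2).div (cont_h ha')
        (fun p hp => hne p.1 hp.1 p.2 hp.2))).mul (cont_vx ha')
    · exact (continuousOn_const.mul (cont_hx ha')).mul (cont_vxxT ha' hμ)
  · exact ((cont_v ha').mul ((cont_hx ha').pow 2)).div (cont_h ha')
      (fun p hp => hne p.1 hp.1 p.2 hp.2)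
  · intro τ hτ
    rw [sol.bc0 τ (le_of_lt (lt_of_lt_of_le ha' hτ.1))]; ring
  · intro τ hτ
    rw [sol.bcL τ (le_of_lt (lt_of_lt_of_le ha' hτ.1))]; ring
  · have hsub : Icc (t/4) (t+2) ×ˢ Ioo (0:ℝ) L ⊆ Icc (t/4) (t+2) ×ˢ Icc 0 L :=
      prod_mono_right Ioo_subset_Icc_self
    have hsub2 : Icc (t/4) (t+2) ×ˢ Ioo (0:ℝ) L ⊆ Ioi (0:ℝ) ×ˢ Ioo 0 L :=
      prod_mono_left (fun τ hτ => lt_of_lt_of_le ha' hτ.1)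
    apply ContinuousOn.add
    · exact (((cont_vx ha').mul ((cont_hx ha').pow 2)).div (cont_h ha')
        (fun p hp => hne p.1 hp.1 p.2 hp.2)).mono hsub
    · refine ((cont_v ha').mono hsub).mul (ContinuousOn.sub ?_ ?_)
      · exact (((continuousOn_const.mul ((cont_hx ha').mono hsub)).mul
          (sol.hxx_cont.mono hsub2)).div ((cont_h ha').mono hsub)
          (fun p hp => hne p.1 (hsub hp).1 p.2 (hsub hp).2))
      · exact (((cont_hx ha').pow 3).div ((cont_h ha').pow 2)
          (fun p hp => pow_ne_zero 2 (hne p.1 hp.1 p.2 hp.2))).mono hsub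
  · intro τ hτ x hx
    have hτ0 : 0 < τ := mem_pos ht0 hτ
    have hx' : x ∈ Icc 0 L := Ioo_subset_Icc_self hx
    have hxne : sol.h τ x ≠ 0 := hne τ hτ x hx'
    have d1 : HasDerivAt (fun y => sol.v τ y) (sol.vx τ x) x := hasDerivAt_v_x hτ0 hx
    have d2 : HasDerivAt (fun y => sol.hx τ y) (sol.hxx τ x) x := sol.hxx_deriv τ hτ0 x hx
    have d3 : HasDerivAt (fun y => sol.h τ y) (sol.hx τ x) x := hasDerivAt_h_x hτ0.le hx
    have := ((d1.mul (d2.pow 2)).div d3 hxne)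
    refine this.congr_deriv ?_
    simp only [Pi.mul_apply, Pi.pow_apply, Pi.add_apply, Pi.sub_apply, Pi.neg_apply, Pi.div_apply]
    field_simp
    ring
  · intro τ hτ x hx
    have hτ0 : 0 < τ := mem_pos ht0 hτ
    have hx' : x ∈ Icc 0 L := Ioo_subset_Icc_self hx
    have hxne : sol.h τ x ≠ 0 := hne τ hτ x hx'
    have dhx : HasDerivAt (fun σ => sol.hx σ x) (sol.hxt τ x) τ := sol.hxt_deriv τ hτ0 x hx
    have dh : HasDerivAt (fun σ => sol.h σ x) (sol.ht τ x) τ := hasDerivAt_h_t hτ0 hx'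
    have := (dhx.pow 2).div dh hxne
    refine this.congr_deriv ?_
    simp only [Pi.mul_apply, Pi.pow_apply, Pi.add_apply, Pi.sub_apply, Pi.neg_apply, Pi.div_apply]
    rw [hxt_eq hL hμ hτ0 hx, Ncont, vxxT, ht_eq hτ0 hx']
    have hE1 : E1 sol τ x = μ * sol.h τ x * sol.vxx τ x := by
      have h1 := vxxT_eq (sol := sol) hμ hτ0 hx hL
      rw [vxxT] at h1
      field_simp at h1
      linarith [h1]
    rw [hE1]
    field_simp
    ring

lemma ae_Ioo {L : ℝ} (hL : 0 < L) : ∀ᵐ x ∂(volume : Measure ℝ), x ∈ Ι (0:ℝ) L → x ∈ Ioo 0 L := by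
  have h1 : (volume : Measure ℝ) {L} = 0 := measure_singleton L
  rw [MeasureTheory.measure_eq_zero_iff_ae_notMem] at h1
  filter_upwards [h1] with x hx hm
  rw [uIoc_of_le hL.le] at hm
  exact ⟨hm.1, lt_of_le_of_ne hm.2 (by simpa using hx)⟩

lemma S_eq (hL : 0 < L) (hμ : 0 < μ) (ht0 : 0 < t) :
    (∫ x in (0:ℝ)..L, (sol.ht t x * sol.v t x ^2 + 2 * sol.h t x * sol.v t x * sol.vt t x))
      + g * (∫ x in (0:ℝ)..L, 2*(sol.h t x - m/L)*sol.ht t x)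
      + μ * (∫ x in (0:ℝ)..L, (sol.vt t x * sol.hx t x
          + sol.vx t x * (sol.hx t x * sol.v t x + sol.h t x * sol.vx t x)))
      + (μ^2/2) * (∫ x in (0:ℝ)..L, (-2 * (sol.hx t x ^2 / sol.h t x) * sol.vx t x
          - 2 * sol.hx t x * vxxT sol t x))
    = sol.f t * (2 * (∫ x in (0:ℝ)..L, sol.h t x * sol.v t x) + μ * (sol.h t L - sol.h t 0))
      - μ * (∫ x in (0:ℝ)..L, sol.h t x * sol.vx t x ^2)
      - μ * g * (∫ x in (0:ℝ)..L, sol.hx t x ^2) := by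
  have h2 : (0:ℝ) < t/2 := by linarith
  have ht2 : t ∈ Icc (t/2) (t+1) := ⟨by linarith, by linarith⟩
  have ch : ContinuousOn (fun x => sol.h t x) (Icc 0 L) :=
    contSlice2 (cont_h (b' := t+1) h2) ht2
  have cht : ContinuousOn (fun x => sol.ht t x) (Icc 0 L) :=
    contSlice2 (cont_ht (b' := t+1) h2) ht2
  have chx : ContinuousOn (fun x => sol.hx t x) (Icc 0 L) :=
    contSlice2 (cont_hx (b' := t+1) h2) ht2
  have cv : ContinuousOn (fun x => sol.v t x) (Icc 0 L) :=
    contSlice2 (cont_v (b' := t+1) h2) ht2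
  have cvt : ContinuousOn (fun x => sol.vt t x) (Icc 0 L) :=
    contSlice2 (cont_vt (b' := t+1) h2) ht2
  have cvx : ContinuousOn (fun x => sol.vx t x) (Icc 0 L) :=
    contSlice2 (cont_vx (b' := t+1) h2) ht2
  have cvxxT : ContinuousOn (fun x => vxxT sol t x) (Icc 0 L) :=
    contSlice2 (cont_vxxT (b' := t+1) h2 hμ) ht2
  have hne : ∀ x ∈ Icc (0:ℝ) L, sol.h t x ≠ 0 := fun x hx => h_ne ht0.le hx
  have intg : ∀ {F : ℝ → ℝ}, ContinuousOn F (Icc 0 L) →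
      IntervalIntegrable F MeasureTheory.volume 0 L := by
    intro F hF
    apply hF.intervalIntegrable_of_Icc hL.le
  -- integrands
  set RC : ℝ → ℝ := fun x => sol.ht t x * sol.v t x ^2 + 2 * sol.h t x * sol.v t x * sol.vt t x
    with hRC_def
  set RB : ℝ → ℝ := fun x => 2*(sol.h t x - m/L)*sol.ht t x with hRB_def
  set RD : ℝ → ℝ := fun x => sol.vt t x * sol.hx t x
      + sol.vx t x * (sol.hx t x * sol.v t x + sol.h t x * sol.vx t x) with hRD_def
  set RP : ℝ → ℝ := fun x => -2 * (sol.hx t x ^2 / sol.h t x) * sol.vx t x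
      - 2 * sol.hx t x * vxxT sol t x with hRP_def
  set Td : ℝ → ℝ := fun x => -(sol.hx t x * sol.v t x ^3 + 3 * sol.h t x * sol.v t x ^2 * sol.vx t x)
      + 2*μ*(sol.vx t x * sol.h t x * sol.vx t x
          + sol.v t x * (sol.hx t x * sol.vx t x + sol.h t x * vxxT sol t x))
      - 2*g*(sol.hx t x * sol.h t x * sol.v t x
          + (sol.h t x - m/L)*(sol.hx t x * sol.v t x + sol.h t x * sol.vx t x)) with hTd_def
  have cRC : ContinuousOn RC (Icc 0 L) := (cht.mul (cv.pow 2)).add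
    (((continuousOn_const.mul ch).mul cv).mul cvt)
  have cRB : ContinuousOn RB (Icc 0 L) := (continuousOn_const.mul (ch.sub continuousOn_const)).mul cht
  have cRD : ContinuousOn RD (Icc 0 L) := (cvt.mul chx).add (cvx.mul ((chx.mul cv).add (ch.mul cvx)))
  have cRP : ContinuousOn RP (Icc 0 L) := ((continuousOn_const.mul
      (((chx.pow 2)).div ch hne)).mul cvx).sub ((continuousOn_const.mul chx).mul cvxxT)
  have cTd : ContinuousOn Td (Icc 0 L) := by
    apply ContinuousOn.sub
    apply ContinuousOn.add
    · exact ((chx.mul (cv.pow 3)).add (((continuousOn_const.mul ch).mul (cv.pow 2)).mul cvx)).neg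
    · exact continuousOn_const.mul (((cvx.mul ch).mul cvx).add
        (cv.mul ((chx.mul cvx).add (ch.mul cvxxT))))
    · exact continuousOn_const.mul (((chx.mul ch).mul cv).add
        ((ch.sub continuousOn_const).mul ((chx.mul cv).add (ch.mul cvx))))
  -- FTC : ∫ hx = h L - h 0
  have hI2 : (∫ x in (0:ℝ)..L, sol.hx t x) = sol.h t L - sol.h t 0 := by
    apply intervalIntegral.integral_eq_sub_of_hasDerivAt_of_le hL.le ch
    · intro x hx
      exact hasDerivAt_h_x ht0.le hx
    · exact intg chx
  -- FTC : ∫ Td = 0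
  have hΘ : (∫ x in (0:ℝ)..L, Td x) = 0 := by
    have hbc0 := sol.bc0 t ht0.le
    have hbcL := sol.bcL t ht0.le
    have := intervalIntegral.integral_eq_sub_of_hasDerivAt_of_le (f := fun x =>
        -(sol.h t x * sol.v t x ^3) + 2*μ*(sol.v t x * sol.h t x * sol.vx t x)
          - 2*g*((sol.h t x - m/L) * sol.h t x * sol.v t x))
      (f' := Td) hL.le ?_ ?_ (intg cTd)
    · rw [this]; simp only [hbcL, hbc0]; ring
    · exact ((ch.mul (cv.pow 3)).neg.add (continuousOn_const.mul ((cv.mul ch).mul cvx))).sub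
        (continuousOn_const.mul (((ch.sub continuousOn_const).mul ch).mul cv))
    · intro x hx
      have dh : HasDerivAt (fun y => sol.h t y) (sol.hx t x) x := hasDerivAt_h_x ht0.le hx
      have dv : HasDerivAt (fun y => sol.v t y) (sol.vx t x) x := hasDerivAt_v_x ht0 hx
      have dvx : HasDerivAt (fun y => sol.vx t y) (sol.vxx t x) x := sol.vxx_deriv t ht0 x hx
      have := (((dh.mul (dv.pow 3)).neg).add
          (((dv.mul dh).mul dvx).const_mul (2*μ))).sub
        ((((dh.sub_const (m/L)).mul dh).mul dv).const_mul (2*g))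
      refine this.congr_deriv ?_
      rw [hTd_def]
      simp only [Pi.mul_apply, Pi.pow_apply, Pi.add_apply, Pi.sub_apply, Pi.neg_apply, Pi.div_apply]
      rw [vxxT_eq hμ ht0 hx hL]
      ring
  -- pointwise identity
  have hpt : ∀ x ∈ Ioo (0:ℝ) L,
      RC x + g * RB x + μ * RD x + (μ^2/2) * RP x
        = (2*sol.f t)*(sol.h t x * sol.v t x) + (μ*sol.f t)*sol.hx t x
          + (-μ)*(sol.h t x * sol.vx t x^2) + (-(μ*g))*(sol.hx t x^2) + Td x := by
    intro x hx
    have hx' : x ∈ Icc 0 L := Ioo_subset_Icc_self hx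
    have hhne : sol.h t x ≠ 0 := hne x hx'
    have hmass := sol.mass_eq t ht0 x hx'
    have hmom := sol.mom_eq t ht0 x hx
    have hvxx := vxxT_eq (sol := sol) hμ ht0 hx hL
    have hht : sol.ht t x = -(sol.hx t x * sol.v t x + sol.h t x * sol.vx t x) := by linarith
    have hvt : sol.vt t x = (μ*(sol.hx t x * sol.vx t x + sol.h t x * vxxT sol t x)
        + sol.h t x * sol.f t - g * sol.h t x * sol.hx t x
        - sol.h t x * sol.v t x * sol.vx t x) / sol.h t x := by
      rw [eq_div_iff hhne, hvxx]
      linear_combination hmom - sol.v t x * hmass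
    rw [hRC_def, hRB_def, hRD_def, hRP_def, hTd_def]
    simp only
    rw [hht, hvt]
    field_simp
    ring
  -- assembling
  rw [← intervalIntegral.integral_const_mul g, ← intervalIntegral.integral_const_mul μ,
    ← intervalIntegral.integral_const_mul (μ^2/2),
    ← intervalIntegral.integral_add (intg cRC) (intg (F := fun x => g * RB x) (continuousOn_const.mul cRB)),
    ← intervalIntegral.integral_add (intg (F := fun x => RC x + g * RB x) (cRC.add (continuousOn_const.mul cRB)))
      (intg (F := fun x => μ * RD x) (continuousOn_const.mul cRD)),
    ← intervalIntegral.integral_add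
      (intg (F := fun x => RC x + g * RB x + μ * RD x) ((cRC.add (continuousOn_const.mul cRB)).add (continuousOn_const.mul cRD)))
      (intg (F := fun x => (μ^2/2) * RP x) (continuousOn_const.mul cRP))]
  have congr1 : (∫ x in (0:ℝ)..L, (RC x + g * RB x + μ * RD x + (μ^2/2) * RP x))
      = ∫ x in (0:ℝ)..L, ((2*sol.f t)*(sol.h t x * sol.v t x) + (μ*sol.f t)*sol.hx t x
          + (-μ)*(sol.h t x * sol.vx t x^2) + (-(μ*g))*(sol.hx t x^2) + Td x) := by
    apply intervalIntegral.integral_congr_ae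
    filter_upwards [ae_Ioo hL] with x hx hmem
    exact hpt x (hx hmem)
  rw [congr1]
  rw [intervalIntegral.integral_add ?i1 (intg cTd),
    intervalIntegral.integral_add ?i2 (intg (F := fun x => (-(μ*g))*(sol.hx t x^2)) (continuousOn_const.mul (chx.pow 2))),
    intervalIntegral.integral_add ?i3 (intg (F := fun x => (-μ)*(sol.h t x * sol.vx t x^2)) (continuousOn_const.mul (ch.mul (cvx.pow 2)))),
    intervalIntegral.integral_add ?i4 (intg (F := fun x => (μ*sol.f t)*sol.hx t x) (continuousOn_const.mul chx))]
  case i1 => exact intg ((((continuousOn_const.mul (ch.mul cv)).add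
      (continuousOn_const.mul chx)).add
      (continuousOn_const.mul (ch.mul (cvx.pow 2)))).add
      (continuousOn_const.mul (chx.pow 2)))
  case i2 => exact intg (((continuousOn_const.mul (ch.mul cv)).add
      (continuousOn_const.mul chx)).add
      (continuousOn_const.mul (ch.mul (cvx.pow 2))))
  case i3 => exact intg ((continuousOn_const.mul (ch.mul cv)).add
      (continuousOn_const.mul chx))
  case i4 => exact intg (continuousOn_const.mul (ch.mul cv))
  rw [hΘ, intervalIntegral.integral_const_mul, intervalIntegral.integral_const_mul, hI2]
  have e1 : (∫ x in (0:ℝ)..L, (-μ)*(sol.h t x * sol.vx t x^2))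
      = -μ * ∫ x in (0:ℝ)..L, sol.h t x * sol.vx t x^2 :=
    intervalIntegral.integral_const_mul _ _
  have e2 : (∫ x in (0:ℝ)..L, (-(μ*g))*(sol.hx t x^2))
      = -(μ*g) * ∫ x in (0:ℝ)..L, sol.hx t x^2 :=
    intervalIntegral.integral_const_mul _ _
  rw [e1, e2]
  ring

lemma int_hx (hL : 0 < L) (ht0 : 0 < t) :
    (∫ x in (0:ℝ)..L, sol.hx t x) = sol.h t L - sol.h t 0 := by
  have h2 : (0:ℝ) < t/2 := by linarith
  have ht2 : t ∈ Icc (t/2) (t+1) := ⟨by linarith, by linarith⟩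
  apply intervalIntegral.integral_eq_sub_of_hasDerivAt_of_le hL.le
    (contSlice2 (cont_h (b' := t+1) h2) ht2)
  · intro x hx
    exact hasDerivAt_h_x ht0.le hx
  · exact (contSlice2 (cont_hx (b' := t+1) h2) ht2).intervalIntegrable_of_Icc hL.le

lemma IW_split (hL : 0 < L) (hτ0 : 0 < t) :
    (∫ x in (0:ℝ)..L, (sol.h t x)⁻¹ * (sol.h t x * sol.v t x + μ * sol.hx t x)^2)
      = (∫ x in (0:ℝ)..L, sol.h t x * sol.v t x ^ 2)
        + ((2*μ) * (∫ x in (0:ℝ)..L, sol.v t x * sol.hx t x)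
          + μ^2 * (∫ x in (0:ℝ)..L, sol.hx t x ^ 2 / sol.h t x)) := by
  have h2 : (0:ℝ) < t/2 := by linarith
  have ht2 : t ∈ Icc (t/2) (t+1) := ⟨by linarith, by linarith⟩
  have ch : ContinuousOn (fun x => sol.h t x) (Icc 0 L) :=
    contSlice2 (cont_h (b' := t+1) h2) ht2
  have chx : ContinuousOn (fun x => sol.hx t x) (Icc 0 L) :=
    contSlice2 (cont_hx (b' := t+1) h2) ht2
  have cv : ContinuousOn (fun x => sol.v t x) (Icc 0 L) :=
    contSlice2 (cont_v (b' := t+1) h2) ht2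
  have hne : ∀ x ∈ Icc (0:ℝ) L, sol.h t x ≠ 0 := fun x hx => h_ne hτ0.le hx
  have intg : ∀ {F : ℝ → ℝ}, ContinuousOn F (Icc 0 L) →
      IntervalIntegrable F MeasureTheory.volume 0 L := fun hF =>
    hF.intervalIntegrable_of_Icc hL.le
  have hEq : EqOn (fun x => (sol.h t x)⁻¹ * (sol.h t x * sol.v t x + μ * sol.hx t x)^2)
      (fun x => sol.h t x * sol.v t x ^ 2 + ((2*μ) * (sol.v t x * sol.hx t x)
        + μ^2 * (sol.hx t x ^ 2 / sol.h t x))) (uIcc 0 L) := by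
    intro x hx
    rw [uIcc_of_le hL.le] at hx
    have := hne x hx
    field_simp
    ring
  rw [intervalIntegral.integral_congr hEq,
    intervalIntegral.integral_add (intg (F := fun x => sol.h t x * sol.v t x ^ 2) (ch.mul (cv.pow 2)))
      (intg (F := fun x => (2*μ) * (sol.v t x * sol.hx t x)
          + μ^2 * (sol.hx t x ^ 2 / sol.h t x))
        ((continuousOn_const.mul (cv.mul chx)).add
        (continuousOn_const.mul ((chx.pow 2).div ch hne)))),
    intervalIntegral.integral_add (intg (F := fun x => (2*μ) * (sol.v t x * sol.hx t x)) (continuousOn_const.mul (cv.mul chx)))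
      (intg (F := fun x => μ^2 * (sol.hx t x ^ 2 / sol.h t x))
        (continuousOn_const.mul ((chx.pow 2).div ch hne))),
    intervalIntegral.integral_const_mul, intervalIntegral.integral_const_mul]

end Derivs

end TankAux

open TankAux

theorem stmt18 (L g μ m q k σ : ℝ) (hL : 0 < L) (hg : 0 < g) (hμ : 0 < μ) (hm : 0 < m)
    (hq : 0 < q) (hk : 0 < k) (hσ : 0 < σ)
    (sol : ClassicalSolution L g μ m)
    -- feedback law (28)
    (feedback : ∀ t > (0:ℝ),
      sol.f t = -σ * (2 * (∫ x in (0:ℝ)..L, sol.h t x * sol.v t x)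
        + μ * (sol.h t L - sol.h t 0) - q * (sol.w t + k * sol.xi t))) :
    ∀ t > (0:ℝ),
      HasDerivAt
        (fun τ =>
          ((1/2) * (∫ x in (0:ℝ)..L,
              (sol.h τ x)⁻¹ * (sol.h τ x * sol.v τ x + μ * sol.hx τ x)^2)
            + (g/2) * (∫ x in (0:ℝ)..L, (sol.h τ x - m/L)^2))
          + ((1/2) * (∫ x in (0:ℝ)..L, sol.h τ x * (sol.v τ x)^2)
            + (g/2) * (∫ x in (0:ℝ)..L, (sol.h τ x - m/L)^2))
          + (q * k^2 / 2) * (sol.xi τ)^2 + (q/2) * (sol.w τ + k * sol.xi τ)^2)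
        (-(μ * g) * (∫ x in (0:ℝ)..L, (sol.hx t x)^2)
          - μ * (∫ x in (0:ℝ)..L, sol.h t x * (sol.vx t x)^2)
          - q * k^3 * (sol.xi t)^2 + q * k * (sol.w t + k * sol.xi t)^2
          - σ * ((∫ x in (0:ℝ)..L, (2 * sol.h t x * sol.v t x + μ * sol.hx t x))
              - q * (sol.w t + k * sol.xi t))^2) t := by
  intro t ht0
  have hB := derivB (sol := sol) (t := t) hL ht0
  have hC := derivC (sol := sol) (t := t) hL ht0
  have hD := derivD (sol := sol) (t := t) hL hμ ht0
  have hP := derivP (sol := sol) (t := t) hL hμ ht0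
  have dξ := sol.xi_deriv t ht0
  have dw := sol.w_deriv t ht0
  -- the ODE pieces
  have h5 : HasDerivAt (fun τ => q * k^2 / 2 * sol.xi τ ^ 2)
      (q * k^2 * sol.xi t * sol.w t) t := by
    have := (dξ.pow 2).const_mul (q * k^2 / 2)
    refine this.congr_deriv ?_
    ring
  have h6 : HasDerivAt (fun τ => q/2 * (sol.w τ + k * sol.xi τ)^2)
      (q * (sol.w t + k * sol.xi t) * (-(sol.f t) + k * sol.w t)) t := by
    have := ((dw.add (dξ.const_mul k)).pow 2).const_mul (q/2)
    refine this.congr_deriv ?_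
    simp only [Pi.mul_apply, Pi.pow_apply, Pi.add_apply, Pi.sub_apply, Pi.neg_apply, Pi.div_apply]
    ring
  -- the W piece
  have hW' : HasDerivAt (fun τ => (1/2) * ((∫ x in (0:ℝ)..L, sol.h τ x * sol.v τ x ^ 2)
      + ((2*μ) * (∫ x in (0:ℝ)..L, sol.v τ x * sol.hx τ x)
        + μ^2 * (∫ x in (0:ℝ)..L, sol.hx τ x ^ 2 / sol.h τ x))))
      ((1/2) * ((∫ x in (0:ℝ)..L, (sol.ht t x * sol.v t x ^2
          + 2 * sol.h t x * sol.v t x * sol.vt t x))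
        + ((2*μ) * (∫ x in (0:ℝ)..L, (sol.vt t x * sol.hx t x
            + sol.vx t x * (sol.hx t x * sol.v t x + sol.h t x * sol.vx t x)))
          + μ^2 * (∫ x in (0:ℝ)..L, (-2 * (sol.hx t x ^2 / sol.h t x) * sol.vx t x
              - 2 * sol.hx t x * vxxT sol t x))))) t :=
    (hC.add ((hD.const_mul (2*μ)).add (hP.const_mul (μ^2)))).const_mul (1/2)
  have hW : HasDerivAt (fun τ => (1/2) * (∫ x in (0:ℝ)..L,
      (sol.h τ x)⁻¹ * (sol.h τ x * sol.v τ x + μ * sol.hx τ x)^2))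
      ((1/2) * ((∫ x in (0:ℝ)..L, (sol.ht t x * sol.v t x ^2
          + 2 * sol.h t x * sol.v t x * sol.vt t x))
        + ((2*μ) * (∫ x in (0:ℝ)..L, (sol.vt t x * sol.hx t x
            + sol.vx t x * (sol.hx t x * sol.v t x + sol.h t x * sol.vx t x)))
          + μ^2 * (∫ x in (0:ℝ)..L, (-2 * (sol.hx t x ^2 / sol.h t x) * sol.vx t x
              - 2 * sol.hx t x * vxxT sol t x))))) t := by
    apply hW'.congr_of_eventuallyEq
    filter_upwards [Ioi_mem_nhds ht0] with τ hτ
    rw [IW_split (sol := sol) hL hτ]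
  -- assemble
  have total := (((hW.add (hB.const_mul (g/2))).add
    ((hC.const_mul (1/2)).add (hB.const_mul (g/2)))).add h5).add h6
  refine total.congr_deriv (Eq.symm ?_)
  have hS := S_eq (sol := sol) (t := t) hL hμ ht0
  have hfb := feedback t ht0
  have hsplit2 : (∫ x in (0:ℝ)..L, (2 * sol.h t x * sol.v t x + μ * sol.hx t x))
      = 2 * (∫ x in (0:ℝ)..L, sol.h t x * sol.v t x) + μ * (sol.h t L - sol.h t 0) := by
    have h2 : (0:ℝ) < t/2 := by linarith
    have ht2 : t ∈ Icc (t/2) (t+1) := ⟨by linarith, by linarith⟩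
    have ch : ContinuousOn (fun x => sol.h t x) (Icc 0 L) :=
      contSlice2 (cont_h (b' := t+1) h2) ht2
    have chx : ContinuousOn (fun x => sol.hx t x) (Icc 0 L) :=
      contSlice2 (cont_hx (b' := t+1) h2) ht2
    have cv : ContinuousOn (fun x => sol.v t x) (Icc 0 L) :=
      contSlice2 (cont_v (b' := t+1) h2) ht2
    have hEq : EqOn (fun x => 2 * sol.h t x * sol.v t x + μ * sol.hx t x)
        (fun x => 2 * (sol.h t x * sol.v t x) + μ * sol.hx t x) (uIcc 0 L) := by
      intro x _; ring
    rw [intervalIntegral.integral_congr hEq,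
      intervalIntegral.integral_add
        (f := fun x => 2 * (sol.h t x * sol.v t x)) (g := fun x => μ * sol.hx t x)
        ((continuousOn_const.mul (ch.mul cv)).intervalIntegrable_of_Icc hL.le)
        ((continuousOn_const.mul chx).intervalIntegrable_of_Icc hL.le),
      intervalIntegral.integral_const_mul, intervalIntegral.integral_const_mul,
      int_hx (sol := sol) hL ht0]
  rw [hsplit2]
  linear_combination -hS - ((2 * (∫ x in (0:ℝ)..L, sol.h t x * sol.v t x)
      + μ * (sol.h t L - sol.h t 0)) - q * (sol.w t + k * sol.xi t)) * hfb
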